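/- For every k ∈ ℕ: (1/γ_{i_k} − L_{i_k}/2 − τ L_res) · ‖x^{k+1} − x^k‖² ≤ F(x^k) + α̃_k − (F(x^{k+1}) + α̃_{k+1}), where α̃_k = (L_res/2) · Σ_{h=k−τ}^{k−1} (h − (k−τ) + 1) · ‖x^{h+1} − x^h‖². -/

import Mathlib

open MeasureTheory ProbabilityTheory Filter Topology Set
open scoped BigOperators RealInnerProductSpace ENNReal

noncomputable section

set_option synthInstance.maxHeartbeats 400000
set_option maxHeartbeats 1000000

variable {m : ℕ} {H : Fin m → Type*}
  [∀ i, NormedAddCommGroup (H i)] [∀ i, InnerProductSpace ℝ (H i)]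

/-- The Hilbert direct sum `H = H₁ ⊕ ⋯ ⊕ H_m` is complete when each factor is. -/
instance [∀ i, CompleteSpace (H i)] : CompleteSpace (PiLp 2 H) :=
  inferInstance

/-- Weighted squared norm `∑ i, w i * ‖u i‖²` on the direct sum. -/
def wnormSq (w : Fin m → ℝ) (u : PiLp 2 H) : ℝ := ∑ i, w i * ‖u i‖ ^ 2

/-- Weighted inner product `∑ i, w i * ⟪u i, v i⟫` on the direct sum. -/
def winner (w : Fin m → ℝ) (u v : PiLp 2 H) : ℝ := ∑ i, w i * ⟪u i, v i⟫

/-- `upd x i u` replaces the `i`-th coordinate of `x` by `u`. -/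
def upd (x : PiLp 2 H) (i : Fin m) (u : H i) : PiLp 2 H := WithLp.toLp 2 (Function.update x i u)

/-- `IsProx c gi v pt` asserts that `pt` is the unique minimizer of
`u ↦ gi u + (1/(2c))‖u − v‖²`, i.e. `pt = prox_{c·gi}(v)`. -/
def IsProx {E : Type*} [NormedAddCommGroup E] (c : ℝ) (gi : E → ℝ) (v pt : E) : Prop :=
  (∀ u : E, gi pt + 1 / (2 * c) * ‖pt - v‖ ^ 2 ≤ gi u + 1 / (2 * c) * ‖u - v‖ ^ 2) ∧
  (∀ u : E, gi u + 1 / (2 * c) * ‖u - v‖ ^ 2 ≤ gi pt + 1 / (2 * c) * ‖pt - v‖ ^ 2 → u = pt)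

/-- The objective `F = f + g`, where `g x = ∑ i, g i (x i)`. -/
def Fobj (f : PiLp 2 H → ℝ) (g : ∀ i, H i → ℝ) (z : PiLp 2 H) : ℝ := f z + ∑ i, g i (z i)

/-- Delayed iterate `x̂^k`, coordinate `j` reads `x^{k - d^k_j}` (deterministic trajectory,
indices in `ℤ`, with `x^n = x^0` for `n ≤ 0`). -/
def xhatD (x : ℤ → PiLp 2 H) (d : ℕ → Fin m → ℕ) (k : ℕ) : PiLp 2 H :=
  WithLp.toLp 2 (fun j => x ((k : ℤ) - d k j) j)

/-- Delayed iterate `x̂^k` (random trajectory). -/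
def xhatP {Ω : Type*} (x : ℤ → Ω → PiLp 2 H) (d : ℕ → Fin m → ℕ) (k : ℕ) (ω : Ω) :
    PiLp 2 H :=
  WithLp.toLp 2 (fun j => x ((k : ℤ) - d k j) ω j)

/-- `alphaT c τ x k = c * ∑_{h=k-τ}^{k-1} (h-(k-τ)+1) ‖x^{h+1} - x^h‖²`. -/
def alphaT (c : ℝ) (τ : ℕ) (x : ℤ → PiLp 2 H) (k : ℕ) : ℝ :=
  c * ∑ j ∈ Finset.range τ,
    ((j : ℝ) + 1) * ‖x ((k : ℤ) - τ + j + 1) - x ((k : ℤ) - τ + j)‖ ^ 2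

/-- `alphaV p c τ x k ω = c * ∑_{h=k-τ}^{k-1} (h-(k-τ)+1) ‖x^{h+1} - x^h‖²_V`. -/
def alphaV {Ω : Type*} (p : Fin m → ℝ) (c : ℝ) (τ : ℕ) (x : ℤ → Ω → PiLp 2 H)
    (k : ℕ) (ω : Ω) : ℝ :=
  c * ∑ j ∈ Finset.range τ,
    ((j : ℝ) + 1) * wnormSq p (x ((k : ℤ) - τ + j + 1) ω - x ((k : ℤ) - τ + j) ω)

/-- The constant `L_res^V/(2√p_max)` appearing in `α_k`, where `L_res^V = L_res √(p_max/p_min)`. -/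
def alphaConst (Lres pmax pmin : ℝ) : ℝ :=
  Lres * Real.sqrt (pmax / pmin) / (2 * Real.sqrt pmax)

/-- The σ-algebra generated by `i_0, …, i_{k-1}`. -/
def pastFiltration {Ω : Type*} [MeasurableSpace Ω] (idx : ℕ → Ω → Fin m) (k : ℕ) :
    MeasurableSpace Ω :=
  ⨆ j ∈ Finset.range k, MeasurableSpace.comap (idx j) ⊤

/-- The random index set `J(k) = {h ∈ {k-τ,…,k-1} : d^k_{i_h} ≥ k-h}`. -/
def Jset {Ω : Type*} (idx : ℕ → Ω → Fin m) (d : ℕ → Fin m → ℕ) (τ k : ℕ) (ω : Ω) :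
    Finset ℕ :=
  (Finset.Ico (k - τ) k).filter fun h => k - h ≤ d k (idx h ω)

/-!
Write `Δ = x^{k+1} - x^k`, which lives in the single block `i = i_k`. The proximal step, whose
objective is `1/γ_i`-strongly convex, lowers `g` by at least `‖Δ‖²/γ_i + ⟪Δ, ∇_i f(x̂^k)⟫`, and the
descent lemma along block `i` raises `f` by at most `⟪∇_i f(x^k), Δ⟫ + L_i ‖Δ‖² / 2`. What remains
is the cross term `⟪∇_i f(x^k) - ∇_i f(x̂^k), Δ⟫`. Moving from `x̂^k` to `x^k` one coordinate at a
time, and telescoping each coordinate over the last `τ` steps (each of which moves one block only),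
bounds `‖∇f(x^k) - ∇f(x̂^k)‖` by `L_res ∑_{h=k-τ}^{k-1} ‖x^{h+1} - x^h‖`. Young's inequality turns
the cross term into `(L_res/2) ∑_h ‖x^{h+1} - x^h‖² + τ (L_res/2) ‖Δ‖²`, and the weights of `α̃`
are chosen so that `α̃_k - α̃_{k+1}` is exactly the first sum minus `τ (L_res/2) ‖Δ‖²`.
-/

open Finset

section InnerProductSpace

variable {E : Type*} [NormedAddCommGroup E] [InnerProductSpace ℝ E]

lemma norm_add_smul_sub_sq (p q : E) (t : ℝ) :
    ‖p + t • (q - p)‖ ^ 2 = (1 - t) * ‖p‖ ^ 2 + t * ‖q‖ ^ 2 - t * (1 - t) * ‖q - p‖ ^ 2 := by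
  have hq : ‖q‖ ^ 2 = ‖p‖ ^ 2 + 2 * ⟪p, q - p⟫ + ‖q - p‖ ^ 2 := by
    rw [← norm_add_sq_real, add_sub_cancel]
  rw [norm_add_sq_real, real_inner_smul_right, norm_smul, Real.norm_eq_abs, mul_pow, sq_abs, hq]
  ring

lemma IsProx.add_norm_sub_sq_le {c : ℝ} {gi : E → ℝ} {v pt : E} (hp : IsProx c gi v pt)
    (hg : ConvexOn ℝ univ gi) (u : E) :
    gi pt + 1 / (2 * c) * ‖pt - v‖ ^ 2 + 1 / (2 * c) * ‖u - pt‖ ^ 2 ≤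
      gi u + 1 / (2 * c) * ‖u - v‖ ^ 2 := by
  set A := gi pt + 1 / (2 * c) * ‖pt - v‖ ^ 2
  set B := 1 / (2 * c) * ‖u - pt‖ ^ 2
  set C := gi u + 1 / (2 * c) * ‖u - v‖ ^ 2
  have hsegment : ∀ t ∈ Ioc (0 : ℝ) 1, A + (1 - t) * B ≤ C := by
    rintro t ⟨ht0, ht1⟩
    have hconv : gi (pt + t • (u - pt)) ≤ (1 - t) * gi pt + t * gi u := by
      have := hg.2 (mem_univ pt) (mem_univ u) (by linarith : (0 : ℝ) ≤ 1 - t) ht0.le (by ring)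
      rwa [show (1 - t) • pt + t • u = pt + t • (u - pt) by module] at this
    have hmin := hp.1 (pt + t • (u - pt))
    have hnorm := norm_add_smul_sub_sq (pt - v) (u - v) t
    rw [sub_sub_sub_cancel_right, show pt - v + t • (u - pt) = pt + t • (u - pt) - v by abel]
      at hnorm
    have : t * (A + (1 - t) * B) ≤ t * C := by
      simp only [A, B, C]
      rw [hnorm] at hmin
      linear_combination hmin + hconv
    exact le_of_mul_le_mul_left this ht0
  have hlim : Tendsto (fun t : ℝ => A + (1 - t) * B) (𝓝[>] 0) (𝓝 (A + (1 - 0) * B)) :=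
    ((continuous_const.add ((continuous_const.sub continuous_id).mul continuous_const)).tendsto
      0).mono_left nhdsWithin_le_nhds
  simpa using le_of_tendsto hlim (eventually_of_mem (Ioc_mem_nhdsGT one_pos) hsegment)

lemma IsProx.apply_add_inner_le {c : ℝ} {gi : E → ℝ} {a w pt : E}
    (hp : IsProx c gi (a - c • w) pt) (hc : 0 < c) (hg : ConvexOn ℝ univ gi) :
    gi pt + 1 / c * ‖pt - a‖ ^ 2 + ⟪pt - a, w⟫ ≤ gi a := by
  have h := hp.add_norm_sub_sq_le hg a
  rw [sub_sub_cancel, show pt - (a - c • w) = (pt - a) + c • w by abel, norm_add_sq_real,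
    norm_sub_rev a pt, real_inner_smul_right, norm_smul, Real.norm_eq_abs, abs_of_pos hc] at h
  have hid : 1 / (2 * c) * (‖pt - a‖ ^ 2 + 2 * (c * ⟪pt - a, w⟫) + (c * ‖w‖) ^ 2) +
      1 / (2 * c) * ‖pt - a‖ ^ 2 - 1 / (2 * c) * (c * ‖w‖) ^ 2 =
      1 / c * ‖pt - a‖ ^ 2 + ⟪pt - a, w⟫ := by
    field_simp
    ring
  linarith

lemma apply_add_le_of_inner_gradient_le [CompleteSpace E] {f : E → ℝ} {f' : E → E}
    (hf : ∀ z, HasGradientAt f (f' z) z) (x e : E) (C : ℝ)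
    (hb : ∀ t ∈ Icc (0 : ℝ) 1, ⟪f' (x + t • e), e⟫ ≤ ⟪f' x, e⟫ + C * t) :
    f (x + e) ≤ f x + ⟪f' x, e⟫ + C / 2 := by
  set φ : ℝ → ℝ := fun t => f (x + t • e) - t * ⟪f' x, e⟫ - C * t ^ 2 / 2
  have hφ : ∀ t : ℝ, HasDerivAt φ (⟪f' (x + t • e), e⟫ - ⟪f' x, e⟫ - C * t) t := by
    intro t
    have hline : HasDerivAt (fun t : ℝ => x + t • e) e t := by
      simpa using ((hasDerivAt_id t).smul_const e).const_add x
    have hf_line : HasDerivAt (fun t : ℝ => f (x + t • e)) ⟪f' (x + t • e), e⟫ t := by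
      have := (hf (x + t • e)).hasFDerivAt.comp_hasDerivAt t hline
      simp only [InnerProductSpace.toDual_apply_apply] at this
      exact this
    have hquad : HasDerivAt (fun t : ℝ => C * t ^ 2 / 2) (C * t) t := by
      refine (((hasDerivAt_pow 2 t).const_mul C).div_const 2).congr_deriv ?_
      ring
    exact (hf_line.sub ((hasDerivAt_id t).mul_const _)).sub hquad |>.congr_deriv (by simp)
  have hdiff : Differentiable ℝ φ := fun t => (hφ t).differentiableAt
  have hanti : AntitoneOn φ (Icc 0 1) := by
    refine antitoneOn_of_deriv_nonpos (convex_Icc 0 1) hdiff.continuous.continuousOn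
      hdiff.differentiableOn fun t ht => ?_
    rw [interior_Icc] at ht
    rw [(hφ t).deriv]
    linarith [hb t ⟨ht.1.le, ht.2.le⟩]
  have h10 : φ 1 ≤ φ 0 := hanti (left_mem_Icc.2 zero_le_one) (right_mem_Icc.2 zero_le_one) zero_le_one
  norm_num [φ] at h10
  linarith

end InnerProductSpace

section Telescoping

variable {E : Type*} [SeminormedAddCommGroup E]

lemma norm_sub_le_sum_range_norm_sub (y : ℤ → E) (a : ℤ) (n : ℕ) :
    ‖y (a + n) - y a‖ ≤ ∑ s ∈ range n, ‖y (a + s + 1) - y (a + s)‖ := by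
  induction n with
  | zero => simp
  | succ n ih =>
    rw [sum_range_succ, Nat.cast_succ, ← add_assoc]
    calc ‖y (a + n + 1) - y a‖
        = ‖(y (a + n + 1) - y (a + n)) + (y (a + n) - y a)‖ := by rw [sub_add_sub_cancel]
      _ ≤ ‖y (a + n + 1) - y (a + n)‖ + ‖y (a + n) - y a‖ := norm_add_le _ _
      _ ≤ _ := by linarith

lemma norm_sub_le_sum_range_norm_sub_of_le (y : ℤ → E) (k : ℤ) {n τ : ℕ} (hn : n ≤ τ) :
    ‖y k - y (k - n)‖ ≤ ∑ s ∈ range τ, ‖y (k - τ + s + 1) - y (k - τ + s)‖ := by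
  obtain ⟨r, rfl⟩ := Nat.exists_eq_add_of_le' hn
  have hshift : ∀ s : ℕ, k - ((r + n : ℕ) : ℤ) + ((r + s : ℕ) : ℤ) = k - n + s := by
    intro s; push_cast; ring
  rw [sum_range_add]
  simp only [hshift]
  have := norm_sub_le_sum_range_norm_sub y (k - n) n
  rw [sub_add_cancel] at this
  exact this.trans (le_add_of_nonneg_left (sum_nonneg fun _ _ => norm_nonneg _))

end Telescoping

lemma two_mul_sum_mul_le {ι : Type*} (s : Finset ι) (a : ι → ℝ) (b : ℝ) :
    2 * (∑ i ∈ s, a i) * b ≤ ∑ i ∈ s, a i ^ 2 + #s * b ^ 2 := by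
  calc 2 * (∑ i ∈ s, a i) * b = ∑ i ∈ s, 2 * a i * b := by rw [mul_sum, sum_mul]
    _ ≤ ∑ i ∈ s, (a i ^ 2 + b ^ 2) := sum_le_sum fun i _ => two_mul_le_add_sq _ _
    _ = ∑ i ∈ s, a i ^ 2 + #s * b ^ 2 := by rw [sum_add_distrib, sum_const, nsmul_eq_mul]

section Update

variable {m : ℕ} {H : Fin m → Type*}

@[simp]
lemma upd_apply_self (z : PiLp 2 H) (i : Fin m) (u : H i) : upd z i u i = u := by
  simp [upd]

@[simp]
lemma upd_apply_of_ne (z : PiLp 2 H) {i j : Fin m} (h : j ≠ i) (u : H i) : upd z i u j = z j := by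
  simp [upd, h]

@[simp]
lemma upd_eq_self (z : PiLp 2 H) (i : Fin m) : upd z i (z i) = z := by
  simp [upd]

end Update

section DirectSum

variable {m : ℕ} {H : Fin m → Type*} [∀ i, NormedAddCommGroup (H i)]

lemma PiLp.norm_eq_norm_apply_of_forall_ne {v : PiLp 2 H} {i : Fin m}
    (hv : ∀ j, j ≠ i → v j = 0) : ‖v‖ = ‖v i‖ := by
  rw [PiLp.norm_eq_of_L2, sum_eq_single i (fun j _ hj => by simp [hv j hj]) (by simp),
    Real.sqrt_sq (norm_nonneg _)]

lemma PiLp.sum_norm_apply_eq_norm_of_forall_ne {v : PiLp 2 H} {i : Fin m}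
    (hv : ∀ j, j ≠ i → v j = 0) : ∑ j, ‖v j‖ = ‖v‖ := by
  rw [PiLp.norm_eq_norm_apply_of_forall_ne hv]
  exact sum_eq_single i (fun j _ hj => by simp [hv j hj]) (by simp)

lemma norm_sub_le_mul_sum_norm_apply_sub {F : Type*} [SeminormedAddCommGroup F]
    {φ : PiLp 2 H → F} {K : ℝ}
    (hφ : ∀ (z : PiLp 2 H) (i : Fin m) (u u' : H i), ‖φ (upd z i u) - φ (upd z i u')‖ ≤ K * ‖u - u'‖)
    (y z : PiLp 2 H) : ‖φ y - φ z‖ ≤ K * ∑ j, ‖y j - z j‖ := by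
  suffices ∀ s : Finset (Fin m), ∀ y : PiLp 2 H, (∀ j ∉ s, y j = z j) →
      ‖φ y - φ z‖ ≤ K * ∑ j ∈ s, ‖y j - z j‖ from this univ y (by simp)
  intro s
  induction s using Finset.induction_on with
  | empty =>
    intro y hy
    rw [show y = z from PiLp.ext fun j => hy j (notMem_empty j)]
    simp
  | insert a s ha ih =>
    intro y hy
    set w := upd y a (z a)
    have hw : ∀ j ∉ s, w j = z j := by
      intro j hj
      by_cases hja : j = a
      · subst hja; simp [w]
      · simp only [w, upd_apply_of_ne _ hja]
        exact hy j (by simp [hja, hj])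
    have hsum : ∑ j ∈ s, ‖w j - z j‖ = ∑ j ∈ s, ‖y j - z j‖ :=
      sum_congr rfl fun j hj => by rw [upd_apply_of_ne _ (ne_of_mem_of_not_mem hj ha)]
    have hstep : ‖φ y - φ w‖ ≤ K * ‖y a - z a‖ := by
      simpa [w] using hφ y a (y a) (z a)
    calc ‖φ y - φ z‖ ≤ ‖φ y - φ w‖ + ‖φ w - φ z‖ := norm_sub_le_norm_sub_add_norm_sub _ _ _
      _ ≤ K * ‖y a - z a‖ + K * ∑ j ∈ s, ‖y j - z j‖ := by
          rw [← hsum]; exact add_le_add hstep (ih w hw)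
      _ = K * ∑ j ∈ insert a s, ‖y j - z j‖ := by rw [sum_insert ha, mul_add]

lemma sum_norm_apply_sub_eq_norm_sub {x : ℤ → PiLp 2 H} {x0 : PiLp 2 H} {idx : ℕ → Fin m}
    (hx_init : ∀ n : ℤ, n ≤ 0 → x n = x0)
    (hx_agree : ∀ (k : ℕ) (j : Fin m), j ≠ idx k → x ((k : ℤ) + 1) j = x (k : ℤ) j) (h : ℤ) :
    ∑ j, ‖x (h + 1) j - x h j‖ = ‖x (h + 1) - x h‖ := by
  rcases lt_or_ge h 0 with hneg | hnonneg
  · simp [hx_init h hneg.le, hx_init (h + 1) (by omega)]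
  · lift h to ℕ using hnonneg
    exact PiLp.sum_norm_apply_eq_norm_of_forall_ne (v := x (h + 1) - x h) (i := idx h)
      fun j hj => sub_eq_zero.2 (hx_agree h j hj)

lemma sum_norm_apply_sub_xhatD_le {x : ℤ → PiLp 2 H} {x0 : PiLp 2 H} {idx : ℕ → Fin m}
    {τ : ℕ} {d : ℕ → Fin m → ℕ} {k : ℕ} (hd : ∀ j, d k j ≤ τ)
    (hx_init : ∀ n : ℤ, n ≤ 0 → x n = x0)
    (hx_agree : ∀ (k : ℕ) (j : Fin m), j ≠ idx k → x ((k : ℤ) + 1) j = x (k : ℤ) j) :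
    ∑ j, ‖x k j - xhatD x d k j‖ ≤ ∑ s ∈ range τ, ‖x (k - τ + s + 1) - x (k - τ + s)‖ := by
  calc ∑ j, ‖x k j - xhatD x d k j‖
      ≤ ∑ j, ∑ s ∈ range τ, ‖x (k - τ + s + 1) j - x (k - τ + s) j‖ :=
        sum_le_sum fun j _ => norm_sub_le_sum_range_norm_sub_of_le (fun n => x n j) k (hd j)
    _ = _ := by
        rw [sum_comm]
        exact sum_congr rfl fun s _ => sum_norm_apply_sub_eq_norm_sub hx_init hx_agree _

lemma alphaT_sub_alphaT_succ (c : ℝ) (τ : ℕ) (x : ℤ → PiLp 2 H) (k : ℕ) :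
    alphaT c τ x k - alphaT c τ x (k + 1) =
      c * ∑ s ∈ range τ, ‖x (k - τ + s + 1) - x (k - τ + s)‖ ^ 2 -
        c * τ * ‖x (k + 1) - x k‖ ^ 2 := by
  set D : ℕ → ℝ := fun s => ‖x (k - τ + s + 1) - x (k - τ + s)‖ ^ 2
  have hsucc : alphaT c τ x (k + 1) = c * ∑ s ∈ range τ, ((s + 1 : ℕ) : ℝ) * D (s + 1) := by
    unfold alphaT
    congr 1
    refine sum_congr rfl fun s _ => ?_
    simp only [D]
    push_cast
    ring_nf
  have hτ : D τ = ‖x (k + 1) - x k‖ ^ 2 := by simp only [D, sub_add_cancel]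
  have hshift := sum_range_succ' (fun s : ℕ => (s : ℝ) * D s) τ
  rw [sum_range_succ] at hshift
  have hdiff : ∑ s ∈ range τ, ((s : ℝ) + 1) * D s - ∑ s ∈ range τ, (s : ℝ) * D s =
      ∑ s ∈ range τ, D s := by
    rw [← sum_sub_distrib]
    exact sum_congr rfl fun s _ => by ring
  rw [hsucc, ← hτ]
  change c * ∑ s ∈ range τ, ((s : ℝ) + 1) * D s - _ = _
  linear_combination c * hdiff + c * hshift

end DirectSum

lemma PiLp.inner_eq_inner_apply_of_forall_ne (w : PiLp 2 H) {v : PiLp 2 H} {i : Fin m}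
    (hv : ∀ j, j ≠ i → v j = 0) : ⟪w, v⟫ = ⟪w i, v i⟫ := by
  rw [PiLp.inner_apply]
  exact sum_eq_single i (fun j _ hj => by simp [hv j hj]) (by simp)

lemma apply_add_le_of_lipschitz_partial_gradient [∀ i, CompleteSpace (H i)]
    {f : PiLp 2 H → ℝ} {f' : PiLp 2 H → PiLp 2 H} (hf : ∀ z, HasGradientAt f (f' z) z)
    {i : Fin m} {Li : ℝ}
    (hL : ∀ (z : PiLp 2 H) (u u' : H i), ‖f' (upd z i u) i - f' (upd z i u') i‖ ≤ Li * ‖u - u'‖)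
    (z Δ : PiLp 2 H) (hΔ : ∀ j, j ≠ i → Δ j = 0) :
    f (z + Δ) ≤ f z + ⟪f' z i, Δ i⟫ + Li / 2 * ‖Δ i‖ ^ 2 := by
  have hline : ∀ t : ℝ, z + t • Δ = upd z i (z i + t • Δ i) := by
    intro t
    ext j
    by_cases hj : j = i
    · subst hj; simp
    · simp [upd_apply_of_ne _ hj, hΔ j hj]
  have hdescent := apply_add_le_of_inner_gradient_le hf z Δ (Li * ‖Δ i‖ ^ 2) fun t ht => by
    have hlip := hL z (z i + t • Δ i) (z i)
    rw [← hline t, upd_eq_self, add_sub_cancel_left] at hlip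
    rw [PiLp.inner_eq_inner_apply_of_forall_ne _ hΔ, PiLp.inner_eq_inner_apply_of_forall_ne _ hΔ,
      ← sub_le_iff_le_add', ← inner_sub_left]
    calc ⟪f' (z + t • Δ) i - f' z i, Δ i⟫ ≤ ‖f' (z + t • Δ) i - f' z i‖ * ‖Δ i‖ :=
          real_inner_le_norm _ _
      _ ≤ Li * ‖t • Δ i‖ * ‖Δ i‖ := by gcongr
      _ = Li * ‖Δ i‖ ^ 2 * t := by
          rw [norm_smul, Real.norm_eq_abs, abs_of_nonneg ht.1]
          ring
  rw [PiLp.inner_eq_inner_apply_of_forall_ne _ hΔ] at hdescent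
  linarith

lemma sufficient_decrease_of_isProx [∀ i, CompleteSpace (H i)]
    {f : PiLp 2 H → ℝ} {f' : PiLp 2 H → PiLp 2 H} (hf : ∀ z, HasGradientAt f (f' z) z)
    {i : Fin m} {Li : ℝ}
    (hL : ∀ (z : PiLp 2 H) (u u' : H i), ‖f' (upd z i u) i - f' (upd z i u') i‖ ≤ Li * ‖u - u'‖)
    {g : ∀ i, H i → ℝ} (hg : ConvexOn ℝ univ (g i)) {γ : ℝ} (hγ : 0 < γ)
    {z z' : PiLp 2 H} {w : H i} (hzz' : ∀ j, j ≠ i → z' j = z j)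
    (hprox : IsProx γ (g i) (z i - γ • w) (z' i)) :
    (1 / γ - Li / 2) * ‖z' - z‖ ^ 2 ≤
      Fobj f g z - Fobj f g z' + ⟪f' z i - w, (z' - z) i⟫ := by
  have hΔ : ∀ j, j ≠ i → (z' - z) j = 0 := fun j hj => sub_eq_zero.2 (hzz' j hj)
  have hp := hprox.apply_add_inner_le hγ hg
  have hf := apply_add_le_of_lipschitz_partial_gradient hf hL z (z' - z) hΔ
  have hgsum : ∑ j, g j (z' j) - ∑ j, g j (z j) = g i (z' i) - g i (z i) := by
    rw [← sum_sub_distrib]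
    exact sum_eq_single i (fun j _ hj => by rw [hzz' j hj, sub_self]) (by simp)
  rw [add_sub_cancel, PiLp.sub_apply] at hf
  rw [PiLp.norm_eq_norm_apply_of_forall_ne hΔ, inner_sub_left, PiLp.sub_apply,
    ← real_inner_comm w, Fobj, Fobj]
  linarith

lemma inner_apply_sub_xhatD_le {x : ℤ → PiLp 2 H} {x0 : PiLp 2 H} {idx : ℕ → Fin m}
    {τ : ℕ} {d : ℕ → Fin m → ℕ} {k : ℕ} (hd : ∀ j, d k j ≤ τ)
    (hx_init : ∀ n : ℤ, n ≤ 0 → x n = x0)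
    (hx_agree : ∀ (k : ℕ) (j : Fin m), j ≠ idx k → x ((k : ℤ) + 1) j = x (k : ℤ) j)
    {f' : PiLp 2 H → PiLp 2 H} {Lres : ℝ} (hLres : 0 ≤ Lres)
    (hf' : ∀ (z : PiLp 2 H) (i : Fin m) (u u' : H i),
      ‖f' (upd z i u) - f' (upd z i u')‖ ≤ Lres * ‖u - u'‖)
    (i : Fin m) (v : PiLp 2 H) :
    ⟪f' (x k) i - f' (xhatD x d k) i, v i⟫ ≤
      Lres / 2 * ∑ s ∈ range τ, ‖x (k - τ + s + 1) - x (k - τ + s)‖ ^ 2 + τ * Lres / 2 * ‖v‖ ^ 2 := by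
  set D : ℕ → ℝ := fun s => ‖x (k - τ + s + 1) - x (k - τ + s)‖
  have hdelay : ‖f' (x k) - f' (xhatD x d k)‖ ≤ Lres * ∑ s ∈ range τ, D s :=
    (norm_sub_le_mul_sum_norm_apply_sub hf' _ _).trans <|
      mul_le_mul_of_nonneg_left (sum_norm_apply_sub_xhatD_le hd hx_init hx_agree) hLres
  have hyoung := two_mul_sum_mul_le (range τ) D ‖v‖
  rw [card_range] at hyoung
  calc ⟪f' (x k) i - f' (xhatD x d k) i, v i⟫
      ≤ ‖(f' (x k) - f' (xhatD x d k)) i‖ * ‖v i‖ := real_inner_le_norm _ _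
    _ ≤ Lres * (∑ s ∈ range τ, D s) * ‖v‖ := by
        gcongr
        · exact (PiLp.norm_apply_le _ _).trans hdelay
        · exact PiLp.norm_apply_le _ _
    _ ≤ _ := by nlinarith

theorem stmt16_general
    [∀ i, CompleteSpace (H i)]
    (τ : ℕ) (d : ℕ → Fin m → ℕ) (hd : ∀ (k : ℕ) (j : Fin m), d k j ≤ min k τ)
    (idx : ℕ → Fin m)
    (x : ℤ → PiLp 2 H) (x0 : PiLp 2 H)
    (hx_init : ∀ n : ℤ, n ≤ 0 → x n = x0)
    (hx_agree : ∀ (k : ℕ) (j : Fin m), j ≠ idx k → x ((k : ℤ) + 1) j = x (k : ℤ) j)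
    (f : PiLp 2 H → ℝ) (f' : PiLp 2 H → PiLp 2 H)
    (hf_grad : ∀ z : PiLp 2 H, HasGradientAt f (f' z) z)
    (Lres : ℝ) (hLres_pos : 0 < Lres)
    (hf_lip_res : ∀ (z : PiLp 2 H) (i : Fin m) (u u' : H i),
      ‖f' (upd z i u) - f' (upd z i u')‖ ≤ Lres * ‖u - u'‖)
    (L : Fin m → ℝ)
    (hf_lip_blk : ∀ (z : PiLp 2 H) (i : Fin m) (u u' : H i),
      ‖f' (upd z i u) i - f' (upd z i u') i‖ ≤ L i * ‖u - u'‖)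
    (g : ∀ i, H i → ℝ) (hg_convex : ∀ i, ConvexOn ℝ Set.univ (g i))
    (γ : Fin m → ℝ) (hγ_pos : ∀ i, 0 < γ i)
    (hx_prox : ∀ k : ℕ,
      IsProx (γ (idx k)) (g (idx k))
        (x (k : ℤ) (idx k) - γ (idx k) • f' (xhatD x d k) (idx k))
        (x ((k : ℤ) + 1) (idx k)))
 :
    ∀ k : ℕ,
      (1 / γ (idx k) - L (idx k) / 2 - τ * Lres) * ‖x ((k : ℤ) + 1) - x (k : ℤ)‖ ^ 2 ≤
        Fobj f g (x (k : ℤ)) + alphaT (Lres / 2) τ x k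
          - (Fobj f g (x ((k : ℤ) + 1)) + alphaT (Lres / 2) τ x (k + 1)) := by
  intro k
  have hstep := sufficient_decrease_of_isProx hf_grad (fun z => hf_lip_blk z (idx k))
    (hg_convex _) (hγ_pos _) (hx_agree k) (hx_prox k)
  have hcross := inner_apply_sub_xhatD_le (fun j => (hd k j).trans (min_le_right _ _))
    hx_init hx_agree hLres_pos.le hf_lip_res (idx k) (x ((k : ℤ) + 1) - x k)
  have hα := alphaT_sub_alphaT_succ (Lres / 2) τ x k
  linarith

/-- Proposition: deterministic descent inequality. -/
theorem stmt16
    [∀ i, CompleteSpace (H i)]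
    (hm : 0 < m)
    (τ : ℕ) (d : ℕ → Fin m → ℕ) (hd : ∀ (k : ℕ) (j : Fin m), d k j ≤ min k τ)
    (idx : ℕ → Fin m)
    (x : ℤ → PiLp 2 H) (x0 : PiLp 2 H)
    (hx_init : ∀ n : ℤ, n ≤ 0 → x n = x0)
    (hx_agree : ∀ (k : ℕ) (j : Fin m), j ≠ idx k → x ((k : ℤ) + 1) j = x (k : ℤ) j)
    (f : PiLp 2 H → ℝ) (f' : PiLp 2 H → PiLp 2 H)
    (hf_grad : ∀ z : PiLp 2 H, HasGradientAt f (f' z) z)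
    (Lres : ℝ) (hLres_pos : 0 < Lres)
    (hf_lip_res : ∀ (z : PiLp 2 H) (i : Fin m) (u u' : H i),
      ‖f' (upd z i u) - f' (upd z i u')‖ ≤ Lres * ‖u - u'‖)
    (L : Fin m → ℝ)
    (hf_lip_blk : ∀ (z : PiLp 2 H) (i : Fin m) (u u' : H i),
      ‖f' (upd z i u) i - f' (upd z i u') i‖ ≤ L i * ‖u - u'‖)
    (g : ∀ i, H i → ℝ) (hg_convex : ∀ i, ConvexOn ℝ Set.univ (g i))
    (hg_lsc : ∀ i, LowerSemicontinuous (g i))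
    (γ : Fin m → ℝ) (hγ_pos : ∀ i, 0 < γ i)
    (hx_prox : ∀ k : ℕ,
      IsProx (γ (idx k)) (g (idx k))
        (x (k : ℤ) (idx k) - γ (idx k) • f' (xhatD x d k) (idx k))
        (x ((k : ℤ) + 1) (idx k)))
 :
    ∀ k : ℕ,
      (1 / γ (idx k) - L (idx k) / 2 - τ * Lres) * ‖x ((k : ℤ) + 1) - x (k : ℤ)‖ ^ 2 ≤
        Fobj f g (x (k : ℤ)) + alphaT (Lres / 2) τ x k
          - (Fobj f g (x ((k : ℤ) + 1)) + alphaT (Lres / 2) τ x (k + 1)) :=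
  stmt16_general τ d hd idx x x0 hx_init hx_agree f f' hf_grad Lres hLres_pos hf_lip_res L
    hf_lip_blk g hg_convex γ hγ_pos hx_prox
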